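/- Let R be a commutative ring with unity such that every finitely generated torsion-free R-module is projective. Let ν be a nilpotent R-linear endomorphism of R^n. Then for every i ≥ 0, the quotient module ker(ν^{i+1})/ker(ν^i) is a finitely generated projective R-module. -/

import Mathlib

private lemma torsionfree_submodule.{u} {R : Type u} [CommRing R] {n : ℕ}
    (S : Submodule R (Fin n → R)) :
    ∀ r ∈ nonZeroDivisors R, ∀ x : S, r • x = 0 → x = 0 := by
  intro r hr x hx
  ext j
  have : r • (x : Fin n → R) = 0 := by
    simpa using congrArg Subtype.val hx
  have hj : (x : Fin n → R) j * r = 0 := by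
    have := congrFun this j
    simpa [mul_comm] using this
  simpa using hr.2 _ hj

private lemma ker_finite.{u} {R : Type u} [CommRing R]
    (hR : ∀ (M : Type u) [AddCommGroup M] [Module R M], Module.Finite R M →
      (∀ r ∈ nonZeroDivisors R, ∀ x : M, r • x = 0 → x = 0) → Module.Projective R M)
    {n : ℕ} (f : (Fin n → R) →ₗ[R] (Fin n → R)) :
    Module.Finite R (LinearMap.ker f) := by
  have hfin : Module.Finite R (LinearMap.range f) := inferInstance
  have hproj : Module.Projective R (LinearMap.range f) :=
    hR _ hfin (torsionfree_submodule _)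
  obtain ⟨s, hs⟩ := Module.projective_lifting_property f.rangeRestrict LinearMap.id
    f.surjective_rangeRestrict
  have hsec : ∀ z : LinearMap.range f, f.rangeRestrict (s z) = z := fun z =>
    congrArg (· z) hs
  set p : (Fin n → R) →ₗ[R] (Fin n → R) := LinearMap.id - s ∘ₗ f.rangeRestrict with hp
  have hmem : ∀ x, p x ∈ LinearMap.ker f := by
    intro x
    have : f (s (f.rangeRestrict x)) = f x := by
      have := congrArg Subtype.val (hsec (f.rangeRestrict x))
      simpa using this
    simp [hp, LinearMap.mem_ker, map_sub, this]
  have hfix : ∀ x ∈ LinearMap.ker f, p x = x := by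
    intro x hx
    have h0 : f.rangeRestrict x = 0 := Subtype.ext (by simpa using hx)
    simp [hp, h0]
  exact Module.Finite.of_surjective (p.codRestrict (LinearMap.ker f) hmem)
    (fun x => ⟨x, Subtype.ext (hfix x x.2)⟩)

theorem stmt2.{u} {R : Type u} [CommRing R]
    (hR : ∀ (M : Type u) [AddCommGroup M] [Module R M], Module.Finite R M →
      (∀ r ∈ nonZeroDivisors R, ∀ x : M, r • x = 0 → x = 0) → Module.Projective R M)
    (n : ℕ) (ν : (Fin n → R) →ₗ[R] (Fin n → R)) (hν : IsNilpotent ν) (i : ℕ) :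
    Module.Finite R
      (LinearMap.ker (ν ^ (i + 1)) ⧸
        (LinearMap.ker (ν ^ i)).comap (LinearMap.ker (ν ^ (i + 1))).subtype) ∧
    Module.Projective R
      (LinearMap.ker (ν ^ (i + 1)) ⧸
        (LinearMap.ker (ν ^ i)).comap (LinearMap.ker (ν ^ (i + 1))).subtype) := by
  set K := LinearMap.ker (ν ^ (i + 1))
  have hKfin : Module.Finite R K := ker_finite hR _
  set φ : K →ₗ[R] (Fin n → R) := (ν ^ i) ∘ₗ K.subtype with hφ
  have hker : LinearMap.ker φ = (LinearMap.ker (ν ^ i)).comap K.subtype := by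
    ext x
    simp [hφ, LinearMap.mem_ker]
  have hfin : Module.Finite R (LinearMap.range φ) := inferInstance
  have hproj : Module.Projective R (LinearMap.range φ) :=
    hR _ hfin (torsionfree_submodule _)
  have e : (K ⧸ (LinearMap.ker (ν ^ i)).comap K.subtype) ≃ₗ[R] LinearMap.range φ :=
    hker ▸ φ.quotKerEquivRange
  exact ⟨Module.Finite.equiv e.symm, Module.Projective.of_equiv e.symm⟩
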